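/- Fix an integer m ≥ 2 and positive reals σ_1², …, σ_n². Let G^r be any reduced set for (σ_1², …, σ_n², m) with |G^r| ≥ 2m, and let L ⊆ G^r with |L| = 2m be a set of indices attaining the 2m largest values of σ_i² among i ∈ G^r. Then Ent(σ²_{G^r}) ≤ ln(2) + 33 · Ent(σ²_L). -/

import Mathlib

/-!
Write `A` and `W` for the total mass of `G^r` and of `L`, and `t` for the least value on `L`. Then
`A·Ent(G^r) = ∑_{G^r∖L} σᵢ log (A/σᵢ) + W log (A/W) + W·Ent(L)` and `W log (A/W) ≤ A/e ≤ A log 2`.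
As `|L| = 2m ≥ 4` and no element of `L` but the largest carries more than half of `W`, concavity of
`x ↦ -x log x` gives `W·Ent(L) ≥ (2m-1) t log (W/t)`. Everything in `G^r∖L` is at most `t`, and a
reduced set meets each dyadic group in at most `2m` indices, so the groups below `t` contribute
geometrically decreasing amounts: `∑_{G^r∖L} σᵢ ≤ 8mt` (whence `A ≤ 5W`) and
`∑_{G^r∖L} σᵢ log (A/σᵢ) ≤ 8mt log (4A/t) ≤ 40mt log (W/t) ≤ 32 W·Ent(L)`.
-/

open Finset Real
open scoped Classical

/-- Entropy-like function `Ent(a_S) = -∑_{i∈S} (a_i/A) ln (a_i/A)` with `A = ∑_{j∈S} a_j`. -/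
noncomputable def ent {ι : Type*} (S : Finset ι) (a : ι → ℝ) : ℝ :=
  -∑ i ∈ S, (a i / ∑ j ∈ S, a j) * Real.log (a i / ∑ j ∈ S, a j)

/-- The minimum variance `σ̲² = min_{i∈[n]} σ_i²`. -/
noncomputable def sigMin (n : ℕ) [NeZero n] (σ : Fin n → ℝ) : ℝ :=
  Finset.univ.inf' Finset.univ_nonempty σ

/-- The `j`-th variance group `G_j = {i ∈ [n] : 2^{j-1} ≤ σ_i²/σ̲² < 2^j}` (for `j ≥ 1`). -/
noncomputable def grp (n : ℕ) [NeZero n] (σ : Fin n → ℝ) (j : ℕ) : Finset (Fin n) :=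
  Finset.univ.filter fun i =>
    (2 : ℝ) ^ (j - 1) ≤ σ i / sigMin n σ ∧ σ i / sigMin n σ < 2 ^ j

/-- `Gr` is a reduced set for `(σ², m)`: `Gr = ∪_j G'_j` where `G'_j = G_j` when
`|G_j| ≤ 2m`, and `G'_j` is an arbitrary `2m`-element subset of `G_j` otherwise. -/
def IsReducedSet (n : ℕ) [NeZero n] (m : ℕ) (σ : Fin n → ℝ) (Gr : Finset (Fin n)) : Prop :=
  ∃ G' : ℕ → Finset (Fin n),
    (∀ j : ℕ, 1 ≤ j →
      ((grp n σ j).card ≤ 2 * m → G' j = grp n σ j) ∧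
      (2 * m < (grp n σ j).card → G' j ⊆ grp n σ j ∧ (G' j).card = 2 * m)) ∧
    (Gr : Set (Fin n)) = ⋃ (j : ℕ) (_ : 1 ≤ j), (G' j : Set (Fin n))

theorem mul_negMulLog_div (W x : ℝ) : W * negMulLog (x / W) = x * log (W / x) := by
  rcases eq_or_ne W 0 with rfl | hW
  · simp
  · rw [negMulLog, ← inv_div, log_inv]
    field_simp

theorem negMulLog_monotoneOn : MonotoneOn negMulLog (Set.Icc 0 (exp (-1))) := by
  intro x hx y hy hxy
  have := mul_log_strictAntiOn.antitoneOn hx hy hxy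
  simp only [negMulLog_eq_neg]
  linarith

theorem negMulLog_le_negMulLog_of_le_quarter {a x : ℝ} (ha : 0 ≤ a) (ha4 : a ≤ 1 / 4)
    (hax : a ≤ x) (hx : x ≤ 1 / 2) : negMulLog a ≤ negMulLog x := by
  have hquarter : (1 / 4 : ℝ) ≤ exp (-1) := by
    rw [exp_neg, one_div]
    exact inv_anti₀ (exp_pos 1) (exp_one_lt_d9.le.trans (by norm_num))
  rcases le_total x (1 / 4) with hx4 | hx4
  · exact negMulLog_monotoneOn ⟨ha, ha4.trans hquarter⟩ ⟨ha.trans hax, hx4.trans hquarter⟩ hax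
  · have hend : negMulLog (1 / 4 : ℝ) = negMulLog (1 / 2) := by
      rw [show (1 / 4 : ℝ) = 1 / 2 * (1 / 2) by norm_num, negMulLog_mul]
      ring
    calc negMulLog a ≤ negMulLog (1 / 4) :=
          negMulLog_monotoneOn ⟨ha, ha4.trans hquarter⟩ ⟨by norm_num, hquarter⟩ ha4
      _ = min (negMulLog (1 / 4)) (negMulLog (1 / 2)) := by rw [hend, min_self]
      _ ≤ negMulLog x := concaveOn_negMulLog.min_le_of_mem_Icc
          (Set.mem_Ici.2 (by norm_num)) (Set.mem_Ici.2 (by norm_num)) ⟨hx4, hx⟩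

theorem mul_log_div_le_mul_log_two {W A : ℝ} (hW : 0 < W) (hWA : W ≤ A) :
    W * log (A / W) ≤ A * log 2 := by
  have hA : 0 < A := hW.trans_le hWA
  have hexp : exp (-log (A / W)) = W / A := by
    rw [exp_neg, exp_log (by positivity), inv_div]
  calc W * log (A / W) = A * (log (A / W) * exp (-log (A / W))) := by
        rw [hexp]; field_simp
    _ ≤ A * exp (-1) := by gcongr; exact mul_exp_neg_le_exp_neg_one _
    _ ≤ A * log 2 := by gcongr; linarith [exp_neg_one_lt_half, log_two_gt_d9]

theorem mul_log_div_le_of_le_two_mul {x y A : ℝ} (hx : 0 < x) (hxy : x ≤ y) (hyx : y ≤ 2 * x)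
    (hxA : x ≤ A) : x * log (A / x) ≤ y * log (2 * A / y) := by
  have hA : 0 < A := hx.trans_le hxA
  have hy : 0 < y := hx.trans_le hxy
  refine mul_le_mul hxy (log_le_log (by positivity) ?_)
    (log_nonneg ((one_le_div hx).2 hxA)) hy.le
  rw [div_le_div_iff₀ hx hy]
  nlinarith

theorem sum_range_two_pow_le (n : ℕ) : ∑ j ∈ range n, (2 : ℝ) ^ j ≤ 2 ^ n := by
  rw [geom_sum_eq (by norm_num)]
  norm_num

theorem sum_range_two_pow_mul_sub_le (n : ℕ) :
    ∑ j ∈ range n, (2 : ℝ) ^ j * (n - j) ≤ 2 ^ (n + 1) := by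
  induction n with
  | zero => simp
  | succ n ih =>
    have hsplit : ∑ j ∈ range n, (2 : ℝ) ^ j * ((n + 1 : ℕ) - j)
        = ∑ j ∈ range n, (2 : ℝ) ^ j * (n - j) + ∑ j ∈ range n, (2 : ℝ) ^ j := by
      rw [← sum_add_distrib]
      push_cast
      exact sum_congr rfl fun j _ => by ring
    rw [sum_range_succ, hsplit]
    have := sum_range_two_pow_le n
    push_cast
    rw [pow_succ, pow_succ] at *
    nlinarith

theorem sum_range_two_pow_mul_add_le (n : ℕ) {x y : ℝ} (hx : 0 ≤ x) (hy : 0 ≤ y) :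
    ∑ j ∈ range n, (2 : ℝ) ^ j * (x + (n - j) * y) ≤ 2 ^ n * (x + 2 * y) := by
  have hsplit : ∑ j ∈ range n, (2 : ℝ) ^ j * (x + (n - j) * y)
      = x * ∑ j ∈ range n, (2 : ℝ) ^ j + y * ∑ j ∈ range n, (2 : ℝ) ^ j * (n - j) := by
    simp only [mul_sum, ← sum_add_distrib]
    exact sum_congr rfl fun j _ => by ring
  rw [hsplit]
  have := sum_range_two_pow_mul_sub_le n
  rw [pow_succ] at this
  nlinarith [mul_le_mul_of_nonneg_left (sum_range_two_pow_le n) hx,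
    mul_le_mul_of_nonneg_left this hy]

theorem sum_le_mul_sum_of_card_fiber_le {ι κ : Type*} [DecidableEq κ] {s : Finset ι}
    {t : Finset κ} {ℓ : ι → κ} {c : ℕ} {f : ι → ℝ} {B : κ → ℝ} (hℓ : ∀ i ∈ s, ℓ i ∈ t)
    (hc : ∀ j ∈ t, #{i ∈ s | ℓ i = j} ≤ c) (hB : ∀ j ∈ t, 0 ≤ B j)
    (hf : ∀ i ∈ s, f i ≤ B (ℓ i)) :
    ∑ i ∈ s, f i ≤ c * ∑ j ∈ t, B j := by
  calc ∑ i ∈ s, f i ≤ ∑ i ∈ s, B (ℓ i) := sum_le_sum hf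
    _ = ∑ j ∈ t, #{i ∈ s | ℓ i = j} * B j := by
        rw [← sum_fiberwise_of_maps_to' hℓ]
        simp only [sum_const, nsmul_eq_mul]
    _ ≤ ∑ j ∈ t, c * B j := sum_le_sum fun j hj =>
        mul_le_mul_of_nonneg_right (by exact_mod_cast hc j hj) (hB j hj)
    _ = c * ∑ j ∈ t, B j := (mul_sum ..).symm

section Entropy

variable {ι : Type*}

theorem ent_eq_sum_negMulLog (S : Finset ι) (a : ι → ℝ) :
    ent S a = ∑ i ∈ S, negMulLog (a i / ∑ j ∈ S, a j) := by
  simp only [ent, negMulLog, neg_mul, sum_neg_distrib]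

theorem ent_nonneg {S : Finset ι} {a : ι → ℝ} (ha : ∀ i ∈ S, 0 ≤ a i) : 0 ≤ ent S a := by
  rw [ent_eq_sum_negMulLog]
  exact sum_nonneg fun i hi => negMulLog_nonneg (div_nonneg (ha i hi) (sum_nonneg ha))
    (div_le_one_of_le₀ (single_le_sum ha hi) (sum_nonneg ha))

theorem sum_mul_ent (S : Finset ι) (a : ι → ℝ) :
    (∑ j ∈ S, a j) * ent S a = ∑ i ∈ S, a i * log ((∑ j ∈ S, a j) / a i) := by
  simp only [ent_eq_sum_negMulLog, mul_sum, mul_negMulLog_div]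

theorem sum_mul_ent_eq_of_subset [DecidableEq ι] {S L : Finset ι} {a : ι → ℝ}
    (hLS : L ⊆ S) (ha : ∀ i ∈ S, 0 < a i) :
    (∑ j ∈ S, a j) * ent S a = ∑ i ∈ S \ L, a i * log ((∑ j ∈ S, a j) / a i)
      + (∑ j ∈ L, a j) * log ((∑ j ∈ S, a j) / ∑ j ∈ L, a j) + (∑ j ∈ L, a j) * ent L a := by
  set A := ∑ j ∈ S, a j
  set W := ∑ j ∈ L, a j
  have hsplit : ∀ i ∈ L, a i * log (A / a i) = a i * log (A / W) + a i * log (W / a i) := by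
    intro i hi
    have hai := ha i (hLS hi)
    have hW : a i ≤ W := single_le_sum (fun j hj => (ha j (hLS hj)).le) hi
    have hA : W ≤ A := sum_le_sum_of_subset_of_nonneg hLS fun j hj _ => (ha j hj).le
    have hW0 : 0 < W := hai.trans_le hW
    rw [← mul_add, ← log_mul (div_pos (hW0.trans_le hA) hW0).ne' (div_pos hW0 hai).ne',
      div_mul_div_cancel₀ hW0.ne']
  rw [sum_mul_ent, sum_mul_ent, ← sum_sdiff hLS, add_assoc, sum_mul, ← sum_add_distrib,
    sum_congr rfl hsplit]

theorem mul_log_div_le_sum_mul_ent {L : Finset ι} {a : ι → ℝ} {t : ℝ} (hL : 4 ≤ #L)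
    (ht : 0 < t) (hta : ∀ i ∈ L, t ≤ a i) :
    (#L - 1 : ℝ) * (t * log ((∑ j ∈ L, a j) / t)) ≤ (∑ j ∈ L, a j) * ent L a := by
  set W := ∑ j ∈ L, a j
  have ha : ∀ i ∈ L, 0 ≤ a i := fun i hi => ht.le.trans (hta i hi)
  obtain ⟨i₀, hi₀, hmax⟩ := L.exists_max_image a (card_pos.1 (by omega))
  have hW : (#L : ℝ) * t ≤ W := by simpa using L.card_nsmul_le_sum a t hta
  have hL4 : (4 : ℝ) ≤ #L := by exact_mod_cast hL
  have hW0 : 0 < W := by nlinarith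
  have hsum : a i₀ + ∑ j ∈ L.erase i₀, a j = W := add_sum_erase L a hi₀
  have hterm : ∀ i ∈ L.erase i₀, W * negMulLog (t / W) ≤ W * negMulLog (a i / W) := by
    intro i hi
    have hiL := mem_of_mem_erase hi
    have hhalf : a i + a i ≤ W := by
      linarith [hmax i hiL, single_le_sum (fun j hj => ha j (mem_of_mem_erase hj)) hi]
    gcongr
    apply negMulLog_le_negMulLog_of_le_quarter (by positivity)
    · rw [div_le_iff₀ hW0]; nlinarith
    · exact div_le_div_of_nonneg_right (hta i hiL) hW0.le
    · rw [div_le_iff₀ hW0]; linarith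
  have hrest := (L.erase i₀).card_nsmul_le_sum _ _ hterm
  rw [card_erase_of_mem hi₀, nsmul_eq_mul, Nat.cast_sub (by omega), Nat.cast_one,
    mul_negMulLog_div] at hrest
  have hmax_nonneg : 0 ≤ W * negMulLog (a i₀ / W) :=
    mul_nonneg hW0.le (negMulLog_nonneg (div_nonneg (ha i₀ hi₀) hW0.le)
      (div_le_one_of_le₀ (single_le_sum ha hi₀) hW0.le))
  rw [ent_eq_sum_negMulLog, mul_sum, ← add_sum_erase L _ hi₀]
  linarith

end Entropy

/-- `a i` lies in the `ℓ i`-th dyadic group at scale `s`, i.e.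
`2 ^ (ℓ i - 1) * s ≤ a i < 2 ^ ℓ i * s`, written without truncated subtraction. -/
def IsDyadicLevel {ι : Type*} (s : ℝ) (S : Finset ι) (a : ι → ℝ) (ℓ : ι → ℕ) : Prop :=
  ∀ i ∈ S, a i < 2 ^ ℓ i * s ∧ 2 ^ ℓ i * s ≤ 2 * a i

namespace IsDyadicLevel

variable {ι : Type*} {S R : Finset ι} {a : ι → ℝ} {ℓ : ι → ℕ} {s A : ℝ} {J c : ℕ}

theorem mono (hℓ : IsDyadicLevel s S a ℓ) (hRS : R ⊆ S) : IsDyadicLevel s R a ℓ :=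
  fun i hi => hℓ i (hRS hi)

theorem level_lt (hℓ : IsDyadicLevel s R a ℓ) (hs : 0 < s) (hJ : ∀ i ∈ R, a i < 2 ^ J * s)
    {i : ι} (hi : i ∈ R) : ℓ i < J + 1 := by
  have h : (2 : ℝ) ^ ℓ i * s < 2 ^ (J + 1) * s := by
    rw [pow_succ]; linarith [(hℓ i hi).2, hJ i hi]
  exact (pow_lt_pow_iff_right₀ one_lt_two).1 (lt_of_mul_lt_mul_right h hs.le)

theorem sum_le (hℓ : IsDyadicLevel s R a ℓ) (hs : 0 < s) (hJ : ∀ i ∈ R, a i < 2 ^ J * s)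
    (hc : ∀ j, #{i ∈ R | ℓ i = j} ≤ c) :
    ∑ i ∈ R, a i ≤ 2 * c * (2 ^ J * s) := by
  calc ∑ i ∈ R, a i ≤ c * ∑ j ∈ range (J + 1), 2 ^ j * s :=
        sum_le_mul_sum_of_card_fiber_le (fun i hi => mem_range.2 (hℓ.level_lt hs hJ hi))
          (fun j _ => hc j) (fun j _ => by positivity) (fun i hi => (hℓ i hi).1.le)
    _ = c * s * ∑ j ∈ range (J + 1), (2 : ℝ) ^ j := by rw [← sum_mul]; ring
    _ ≤ c * s * 2 ^ (J + 1) := by gcongr; exact sum_range_two_pow_le (J + 1)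
    _ = 2 * c * (2 ^ J * s) := by ring

theorem sum_mul_log_div_le (hℓ : IsDyadicLevel s R a ℓ) (hs : 0 < s)
    (hJ : ∀ i ∈ R, a i < 2 ^ J * s) (hA : 2 ^ J * s ≤ A) (hc : ∀ j, #{i ∈ R | ℓ i = j} ≤ c) :
    ∑ i ∈ R, a i * log (A / a i) ≤ 2 * c * (2 ^ J * s) * log (4 * A / (2 ^ J * s)) := by
  set b := (2 : ℝ) ^ J * s
  have hb : 0 < b := by positivity
  have hA0 : 0 < A := hb.trans_le hA
  have hlogAb : 0 ≤ log (A / b) := log_nonneg ((one_le_div hb).2 hA)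
  have hlog2 := log_pos one_lt_two
  -- `B j = 2 ^ j * s * log (2 * A / (2 ^ j * s))`, written relative to the top level `J`
  set B : ℕ → ℝ := fun j => s * (2 ^ j * (log (A / b) + ((J + 1 : ℕ) - j) * log 2))
  have hbound : ∀ i ∈ R, a i * log (A / a i) ≤ B (ℓ i) := by
    intro i hi
    have h2ℓ : 0 < (2 : ℝ) ^ ℓ i * s := by positivity
    have hlog : log (A / b) + ((J + 1 : ℕ) - ℓ i) * log 2 = log (2 * A / (2 ^ ℓ i * s)) := by
      rw [log_div hA0.ne' hb.ne', log_div (by positivity) h2ℓ.ne', log_mul two_ne_zero hA0.ne',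
        log_mul (by positivity) hs.ne', log_mul (by positivity) hs.ne', log_pow, log_pow]
      push_cast
      ring
    rw [show B (ℓ i) = 2 ^ ℓ i * s * log (2 * A / (2 ^ ℓ i * s)) by simp only [B, ← hlog]; ring]
    obtain ⟨hup, hlow⟩ := hℓ i hi
    exact mul_log_div_le_of_le_two_mul (by linarith) hup.le hlow (by linarith [hJ i hi])
  have hB0 : ∀ j ∈ range (J + 1), 0 ≤ B j := by
    intro j hj
    have : (j : ℝ) ≤ (J + 1 : ℕ) := by exact_mod_cast (mem_range.1 hj).le
    have : 0 ≤ ((J + 1 : ℕ) - j : ℝ) * log 2 := by nlinarith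
    positivity
  have h4 : log (4 * A / b) = log (A / b) + 2 * log 2 := by
    rw [mul_div_assoc, log_mul four_ne_zero (by positivity),
      show (4 : ℝ) = 2 ^ 2 by norm_num, log_pow]
    push_cast
    ring
  calc ∑ i ∈ R, a i * log (A / a i) ≤ c * ∑ j ∈ range (J + 1), B j :=
        sum_le_mul_sum_of_card_fiber_le (fun i hi => mem_range.2 (hℓ.level_lt hs hJ hi))
          (fun j _ => hc j) hB0 hbound
    _ ≤ c * (s * (2 ^ (J + 1) * (log (A / b) + 2 * log 2))) := by
        simp only [B, ← mul_sum]
        gcongr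
        exact sum_range_two_pow_mul_add_le (J + 1) hlogAb hlog2.le
    _ = 2 * c * b * log (4 * A / b) := by rw [h4, pow_succ]; ring

end IsDyadicLevel

theorem log_four_mul_div_le {A W t b : ℝ} (ht : 0 < t) (htb : t < b) (hW : 4 * t ≤ W)
    (hWA : W ≤ A) (hA : A ≤ 5 * W) : log (4 * A / b) ≤ 5 * log (W / t) := by
  have hW0 : 0 < W := by linarith
  have hA0 : 0 < A := hW0.trans_le hWA
  have hb : 0 < b := ht.trans htb
  have h4 : (4 : ℝ) ≤ W / t := by rwa [le_div_iff₀ ht]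
  rw [show (5 : ℝ) * log (W / t) = log ((W / t) ^ 5) by rw [log_pow]; norm_num]
  apply log_le_log (by positivity)
  calc 4 * A / b ≤ 20 * (W / t) := by
        rw [div_le_iff₀ hb]; nlinarith [mul_div_cancel₀ W ht.ne']
    _ ≤ 4 ^ 4 * (W / t) := mul_le_mul_of_nonneg_right (by norm_num) (by positivity)
    _ ≤ (W / t) ^ 4 * (W / t) := by gcongr
    _ = (W / t) ^ 5 := (pow_succ _ _).symm

theorem ent_le_log_two_add_mul_ent_of_isDyadicLevel {ι : Type*} [DecidableEq ι]
    {S L : Finset ι} {a : ι → ℝ} {ℓ : ι → ℕ} {s : ℝ} (hL : 4 ≤ #L) (hLS : L ⊆ S)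
    (ha : ∀ i ∈ S, 0 < a i) (htop : ∀ i ∈ L, ∀ j ∈ S \ L, a j ≤ a i)
    (hℓ : IsDyadicLevel s S a ℓ) (hc : ∀ j, #{i ∈ S | ℓ i = j} ≤ #L) :
    ent S a ≤ log 2 + 33 * ent L a := by
  obtain ⟨i₁, hi₁, hmin⟩ := L.exists_min_image a (card_pos.1 (by omega))
  set t := a i₁
  set b := (2 : ℝ) ^ ℓ i₁ * s
  set A := ∑ j ∈ S, a j
  set W := ∑ j ∈ L, a j
  have ht : 0 < t := ha i₁ (hLS hi₁)
  obtain ⟨htb, hbt⟩ := hℓ i₁ (hLS hi₁)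
  have hs : 0 < s := pos_of_mul_pos_right (ht.trans htb) (by positivity)
  have hL4 : (4 : ℝ) ≤ #L := by exact_mod_cast hL
  have hW : (#L : ℝ) * t ≤ W := by simpa using L.card_nsmul_le_sum a t hmin
  have hWA : W ≤ A := sum_le_sum_of_subset_of_nonneg hLS fun j hj _ => (ha j hj).le
  have hW0 : 0 < W := by nlinarith
  have hA0 : 0 < A := hW0.trans_le hWA
  have hR : ∀ i ∈ S \ L, a i < b := fun i hi => (htop i₁ hi₁ i hi).trans_lt htb
  have hℓR := hℓ.mono (R := S \ L) sdiff_subset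
  have hcR : ∀ j, #{i ∈ S \ L | ℓ i = j} ≤ #L :=
    fun j => (card_le_card (filter_subset_filter _ sdiff_subset)).trans (hc j)
  have hA5W : A ≤ 5 * W := by
    nlinarith [sum_sdiff hLS (f := a), hℓR.sum_le hs hR hcR]
  have hrest : ∑ i ∈ S \ L, a i * log (A / a i) ≤ 32 * (A * ent L a) := by
    have hlogb : 0 ≤ log (4 * A / b) := log_nonneg ((one_le_div (by positivity)).2 (by nlinarith))
    have hWt : 0 ≤ t * log (W / t) :=
      mul_nonneg ht.le (log_nonneg ((one_le_div ht).2 (by nlinarith)))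
    calc ∑ i ∈ S \ L, a i * log (A / a i) ≤ 2 * #L * b * log (4 * A / b) :=
          hℓR.sum_mul_log_div_le hs hR (by nlinarith) hcR
      _ ≤ 2 * #L * (2 * t) * (5 * log (W / t)) := by
          gcongr
          exact log_four_mul_div_le ht htb (by nlinarith) hWA hA5W
      _ ≤ 32 * ((#L - 1) * (t * log (W / t))) := by nlinarith
      _ ≤ 32 * (W * ent L a) := by gcongr 32 * ?_; exact mul_log_div_le_sum_mul_ent hL ht hmin
      _ ≤ 32 * (A * ent L a) := by gcongr; exact ent_nonneg fun i hi => (ha i (hLS hi)).le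
  rw [← mul_le_mul_iff_right₀ hA0, sum_mul_ent_eq_of_subset hLS ha]
  nlinarith [mul_log_div_le_mul_log_two hW0 hWA, ent_nonneg fun i hi => (ha i (hLS hi)).le]

theorem sigMin_pos {n : ℕ} [NeZero n] {σ : Fin n → ℝ} (hσ : ∀ i, 0 < σ i) : 0 < sigMin n σ :=
  (lt_inf'_iff _).2 fun i _ => hσ i

theorem IsReducedSet.exists_level {n m : ℕ} [NeZero n] {σ : Fin n → ℝ} {Gr : Finset (Fin n)}
    (hGr : IsReducedSet n m σ Gr) (hσ : ∀ i, 0 < σ i) :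
    ∃ ℓ : Fin n → ℕ, IsDyadicLevel (sigMin n σ) Gr σ ℓ ∧ ∀ j, #{i ∈ Gr | ℓ i = j} ≤ 2 * m := by
  obtain ⟨G', hG', hGr⟩ := hGr
  have hmem : ∀ i ∈ Gr, ∃ j, 1 ≤ j ∧ i ∈ G' j := by
    intro i hi
    have hi' : i ∈ (Gr : Set (Fin n)) := hi
    simpa [hGr] using hi'
  -- level `i` by a group `G' j` containing it: the fibre over `j` then lies inside `G' j`
  choose! ℓ hℓ1 hℓG using hmem
  have hG'grp : ∀ j, 1 ≤ j → G' j ⊆ grp n σ j ∧ #(G' j) ≤ 2 * m := by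
    intro j hj
    rcases le_or_gt #(grp n σ j) (2 * m) with h | h
    · rw [(hG' j hj).1 h]
      exact ⟨subset_rfl, h⟩
    · exact ⟨((hG' j hj).2 h).1, ((hG' j hj).2 h).2.le⟩
  refine ⟨ℓ, fun i hi => ?_, fun j => ?_⟩
  · have hs := sigMin_pos hσ
    have hgrp := (hG'grp _ (hℓ1 i hi)).1 (hℓG i hi)
    simp only [grp, mem_filter, mem_univ, true_and, le_div_iff₀ hs, div_lt_iff₀ hs] at hgrp
    have hpow : (2 : ℝ) ^ ℓ i = 2 * 2 ^ (ℓ i - 1) := by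
      rw [← pow_succ', Nat.sub_add_cancel (hℓ1 i hi)]
    exact ⟨hgrp.2, by rw [hpow, mul_assoc]; linarith [hgrp.1]⟩
  · rcases Nat.eq_zero_or_pos j with rfl | hj
    · rw [filter_false_of_mem fun i hi => Nat.one_le_iff_ne_zero.1 (hℓ1 i hi), card_empty]
      exact Nat.zero_le _
    · refine (card_le_card fun i hi => ?_).trans (hG'grp j hj).2
      obtain ⟨hiGr, rfl⟩ := mem_filter.1 hi
      exact hℓG i hiGr

theorem stmt_9_general (n m : ℕ) [NeZero n] (hm : 2 ≤ m)
    (σ : Fin n → ℝ) (hσ : ∀ i, 0 < σ i)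
    (Gr : Finset (Fin n)) (hGr : IsReducedSet n m σ Gr)
    (L : Finset (Fin n)) (hLsub : L ⊆ Gr) (hLcard : L.card = 2 * m)
    (hLtop : ∀ i ∈ L, ∀ j ∈ Gr \ L, σ j ≤ σ i) :
    ent Gr σ ≤ Real.log 2 + 33 * ent L σ := by
  obtain ⟨ℓ, hℓ, hfiber⟩ := hGr.exists_level hσ
  exact ent_le_log_two_add_mul_ent_of_isDyadicLevel (by omega) hLsub (fun i _ => hσ i) hLtop hℓ
    (hLcard ▸ hfiber)

/-- **Lemma.** For `m ≥ 2`, a reduced set `G^r` with `|G^r| ≥ 2m`, and `L ⊆ G^r` the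
`2m` indices with the largest variances in `G^r`,
`Ent(σ²_{G^r}) ≤ ln 2 + 33 Ent(σ²_L)`. -/
theorem stmt_9 (n m : ℕ) [NeZero n] (hm : 2 ≤ m)
    (σ : Fin n → ℝ) (hσ : ∀ i, 0 < σ i)
    (Gr : Finset (Fin n)) (hGr : IsReducedSet n m σ Gr) (hGrcard : 2 * m ≤ Gr.card)
    (L : Finset (Fin n)) (hLsub : L ⊆ Gr) (hLcard : L.card = 2 * m)
    (hLtop : ∀ i ∈ L, ∀ j ∈ Gr \ L, σ j ≤ σ i) :
    ent Gr σ ≤ Real.log 2 + 33 * ent L σ :=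
  stmt_9_general n m hm σ hσ Gr hGr L hLsub hLcard hLtop
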